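/- The Fisher–Rao distance between two univariate Gaussian distributions N(μ₁, σ₁²) and N(μ₂, σ₂²), with σ₁, σ₂ > 0, admits the closed form d_F = √2 · arcosh( 1 + ((μ₁ − μ₂)² + 2(σ₁ − σ₂)²) / (4σ₁σ₂) ). -/

import Mathlib

open Real MeasureTheory

/-- Fisher–Rao length of a path `γ(t) = (μ(t), σ(t))`, `t ∈ [0,1]`, for the metric
`ds² = (dμ² + 2dσ²)/σ²`:  `∫₀¹ √(μ′(t)² + 2σ′(t)²) / σ(t) dt`. -/
noncomputable def fisherRaoLength (γ : ℝ → ℝ × ℝ) : ℝ :=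
  ∫ t in (0:ℝ)..1,
    Real.sqrt ((deriv (fun s => (γ s).1) t) ^ 2 + 2 * (deriv (fun s => (γ s).2) t) ^ 2) /
      (γ t).2

/-- A path `γ : [0,1] → ℝ × (0,∞)` joining `p` to `q`, C¹ on `[0,1]`, staying in the
upper half-plane `σ > 0`. -/
def IsAdmissiblePath (p q : ℝ × ℝ) (γ : ℝ → ℝ × ℝ) : Prop :=
  γ 0 = p ∧ γ 1 = q ∧ ContDiffOn ℝ 1 γ (Set.Icc 0 1) ∧
    ∀ t ∈ Set.Icc (0:ℝ) 1, 0 < (γ t).2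

/-- Fisher–Rao distance on the univariate-Gaussian manifold in `(μ, σ)` coordinates:
infimum of Fisher–Rao path lengths over admissible paths. -/
noncomputable def fisherRaoDist (p q : ℝ × ℝ) : ℝ :=
  sInf (fisherRaoLength '' {γ | IsAdmissiblePath p q γ})

/-- Inverse hyperbolic cosine. -/
noncomputable def arcosh (x : ℝ) : ℝ := Real.log (x + Real.sqrt (x ^ 2 - 1))

/-!
Lower bound: `u = fisherRaoCosh p` satisfies `|∇u| = √((u² - 1) / 2)` in the Fisher–Rao
metric, so `√2 · arcosh u` is `1`-Lipschitz along every path, and integrating its slope bounds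
the length of any path from `p` to `q` below by `√2 · arcosh (u q)` (after smoothing at `p` by
`ε → 0`).
Upper bound: the geodesic, written explicitly through the hyperboloid model, has constant speed
`√2 · arcosh (u q)`.
-/

open Set

noncomputable def fisherRaoSpeed (γ : ℝ → ℝ × ℝ) (t : ℝ) : ℝ :=
  √(deriv (fun s => (γ s).1) t ^ 2 + 2 * deriv (fun s => (γ s).2) t ^ 2) / (γ t).2

theorem fisherRaoLength_eq_integral_fisherRaoSpeed (γ : ℝ → ℝ × ℝ) :
    fisherRaoLength γ = ∫ t in (0 : ℝ)..1, fisherRaoSpeed γ t :=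
  rfl

namespace IsAdmissiblePath

variable {p q : ℝ × ℝ} {γ : ℝ → ℝ × ℝ}

theorem snd_left_pos (hγ : IsAdmissiblePath p q γ) : 0 < p.2 :=
  hγ.1 ▸ hγ.2.2.2 0 (left_mem_Icc.2 zero_le_one)

theorem snd_right_pos (hγ : IsAdmissiblePath p q γ) : 0 < q.2 :=
  hγ.2.1 ▸ hγ.2.2.2 1 (right_mem_Icc.2 zero_le_one)

theorem differentiableAt (hγ : IsAdmissiblePath p q γ) {t : ℝ} (ht : t ∈ Ioo 0 1) :
    DifferentiableAt ℝ γ t :=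
  (hγ.2.2.1.contDiffAt (Icc_mem_nhds ht.1 ht.2)).differentiableAt one_ne_zero

theorem integrableOn_fisherRaoSpeed (hγ : IsAdmissiblePath p q γ) :
    IntegrableOn (fisherRaoSpeed γ) (Icc 0 1) := by
  obtain ⟨-, -, hC, hpos⟩ := hγ
  have hderiv {f : ℝ → ℝ} (hf : ContDiffOn ℝ 1 f (Icc 0 1)) :
      ContinuousOn (derivWithin f (Icc 0 1)) (Icc 0 1) :=
    hf.continuousOn_derivWithin (uniqueDiffOn_Icc one_pos) le_rfl
  have hcont : ContinuousOn (fun t => √(derivWithin (fun s => (γ s).1) (Icc 0 1) t ^ 2 +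
      2 * derivWithin (fun s => (γ s).2) (Icc 0 1) t ^ 2) / (γ t).2) (Icc 0 1) :=
    ((((hderiv hC.fst).pow 2).add (continuousOn_const.mul ((hderiv hC.snd).pow 2))).sqrt).div
      hC.continuousOn.snd fun t ht => (hpos t ht).ne'
  rw [integrableOn_Icc_iff_integrableOn_Ioo]
  refine (hcont.integrableOn_Icc.mono_set Ioo_subset_Icc_self).congr_fun (fun t ht => ?_)
    measurableSet_Ioo
  simp only [fisherRaoSpeed, derivWithin_of_mem_nhds (Icc_mem_nhds ht.1 ht.2)]

theorem sub_le_fisherRaoLength (hγ : IsAdmissiblePath p q γ) {F : ℝ → ℝ}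
    (hF : ContinuousOn F (Icc 0 1))
    (hF' : ∀ t ∈ Ioo (0 : ℝ) 1, ∃ F', HasDerivAt F F' t ∧ F' ≤ fisherRaoSpeed γ t) :
    F 1 - F 0 ≤ fisherRaoLength γ := by
  choose! F' hderiv hle using hF'
  exact intervalIntegral.sub_le_integral_of_hasDeriv_right_of_le zero_le_one hF
    (fun t ht => (hderiv t ht).hasDerivWithinAt) hγ.integrableOn_fisherRaoSpeed hle

end IsAdmissiblePath

/-- `cosh (d / √2)` for the Fisher–Rao distance `d`: after `μ = √2 x` the metric is twice the
hyperbolic metric of the upper half-plane, whose distance has cosh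
`1 + |z - w|² / (2 Im z Im w)`. -/
noncomputable def fisherRaoCosh (p q : ℝ × ℝ) : ℝ :=
  1 + ((p.1 - q.1) ^ 2 + 2 * (p.2 - q.2) ^ 2) / (4 * p.2 * q.2)

theorem fisherRaoCosh_self (p : ℝ × ℝ) : fisherRaoCosh p p = 1 := by
  simp [fisherRaoCosh]

theorem one_le_fisherRaoCosh {p q : ℝ × ℝ} (hp : 0 < p.2) (hq : 0 < q.2) :
    1 ≤ fisherRaoCosh p q :=
  le_add_of_nonneg_right (by positivity)

theorem one_lt_fisherRaoCosh {p q : ℝ × ℝ} (hp : 0 < p.2) (hq : 0 < q.2) (hpq : p ≠ q) :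
    1 < fisherRaoCosh p q := by
  have hN : 0 < (p.1 - q.1) ^ 2 + 2 * (p.2 - q.2) ^ 2 := by
    have : p.1 - q.1 ≠ 0 ∨ p.2 - q.2 ≠ 0 := by
      contrapose! hpq
      exact Prod.ext (sub_eq_zero.1 hpq.1) (sub_eq_zero.1 hpq.2)
    rcases this with h | h <;> positivity
  exact lt_add_of_pos_right 1 (by positivity)

theorem continuousOn_fisherRaoCosh {p : ℝ × ℝ} (hp : 0 < p.2) :
    ContinuousOn (fisherRaoCosh p) {z | 0 < z.2} := by
  unfold fisherRaoCosh
  refine continuousOn_const.add (.div (by fun_prop) (by fun_prop) fun z (hz : 0 < z.2) => ?_)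
  positivity

theorem sqrt_two_mul_add_mul_le (a b x y : ℝ) :
    √2 * (a * x + b * y) ≤ √(2 * a ^ 2 + b ^ 2) * √(x ^ 2 + 2 * y ^ 2) := by
  rw [← Real.sqrt_mul (by positivity)]
  calc √2 * (a * x + b * y) ≤ |√2 * (a * x + b * y)| := le_abs_self _
    _ = √(2 * (a * x + b * y) ^ 2) := by
      rw [← Real.sqrt_sq_eq_abs, mul_pow, Real.sq_sqrt zero_le_two]
    _ ≤ _ := Real.sqrt_le_sqrt (by nlinarith [sq_nonneg (2 * a * y - b * x)])

/-- The Fisher–Rao gradient of `fisherRaoCosh p` has norm `√((u² - 1) / 2)`, `u` its value. -/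
theorem exists_hasDerivAt_fisherRaoCosh {p : ℝ × ℝ} (hp : 0 < p.2) {c : ℝ → ℝ × ℝ}
    {m' s' t : ℝ} (hm : HasDerivAt (fun τ => (c τ).1) m' t)
    (hs : HasDerivAt (fun τ => (c τ).2) s' t) (hc : 0 < (c t).2) :
    ∃ u', HasDerivAt (fun τ => fisherRaoCosh p (c τ)) u' t ∧
      √2 * u' ≤ √(fisherRaoCosh p (c t) ^ 2 - 1) * (√(m' ^ 2 + 2 * s' ^ 2) / (c t).2) := by
  set N := (p.1 - (c t).1) ^ 2 + 2 * (p.2 - (c t).2) ^ 2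
  set a := ((c t).1 - p.1) / (2 * p.2 * (c t).2)
  set b := (4 * (c t).2 * ((c t).2 - p.2) - N) / (4 * p.2 * (c t).2 ^ 2)
  have hgrad : fisherRaoCosh p (c t) ^ 2 - 1 = (c t).2 ^ 2 * (2 * a ^ 2 + b ^ 2) := by
    simp only [fisherRaoCosh, a, b, N]
    field_simp
    ring
  refine ⟨a * m' + b * s', ?_, ?_⟩
  · have := ((((hm.const_sub p.1).pow 2).add (((hs.const_sub p.2).pow 2).const_mul 2)).div
      (hs.const_mul (4 * p.2)) (by positivity)).const_add 1
    refine this.congr_deriv ?_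
    simp only [a, b, N, Pi.add_apply, Pi.pow_apply]
    field_simp
    ring
  · rw [hgrad, Real.sqrt_mul' _ (by positivity), Real.sqrt_sq hc.le]
    convert sqrt_two_mul_add_mul_le a b m' s' using 1
    field_simp

namespace IsAdmissiblePath

variable {p q : ℝ × ℝ} {γ : ℝ → ℝ × ℝ}

/-- `√2 · arcosh (fisherRaoCosh p · + ε)` has Fisher–Rao gradient of norm at most one, and
the shift by `ε > 0` keeps it smooth at `p`. -/
theorem sqrt_two_mul_arcosh_add_sub_le (hγ : IsAdmissiblePath p q γ) {ε : ℝ} (hε : 0 < ε) :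
    √2 * Real.arcosh (fisherRaoCosh p q + ε) - √2 * Real.arcosh (1 + ε) ≤
      fisherRaoLength γ := by
  have hp := hγ.snd_left_pos
  have ⟨h0, h1, hC, hpos⟩ := hγ
  have hu (t : ℝ) (ht : t ∈ Icc (0 : ℝ) 1) : 1 ≤ fisherRaoCosh p (γ t) :=
    one_le_fisherRaoCosh hp (hpos t ht)
  have := hγ.sub_le_fisherRaoLength
    (F := fun t => √2 * Real.arcosh (fisherRaoCosh p (γ t) + ε)) ?_ ?_
  · simpa [h0, h1, fisherRaoCosh_self] using this
  · refine (continuousOn_arcosh.comp (((continuousOn_fisherRaoCosh hp).comp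
      hC.continuousOn hpos).add continuousOn_const) fun t ht => ?_).const_smul √2
    simpa using (hu t ht).trans (le_add_of_nonneg_right hε.le)
  intro t ht
  obtain ⟨u', hu'd, hu'le⟩ := exists_hasDerivAt_fisherRaoCosh hp
    (hγ.differentiableAt ht).fst.hasDerivAt (hγ.differentiableAt ht).snd.hasDerivAt
    (hpos t (Ioo_subset_Icc_self ht))
  set u := fisherRaoCosh p (γ t)
  have hu1 : 1 ≤ u := hu t (Ioo_subset_Icc_self ht)
  have hr : 0 < √((u + ε) ^ 2 - 1) := Real.sqrt_pos.2 (by nlinarith)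
  refine ⟨√2 * ((√((u + ε) ^ 2 - 1))⁻¹ * u'),
    ((hasDerivAt_arcosh (by simp only [mem_Ioi]; linarith)).comp t
      (hu'd.add_const ε)).const_mul √2, ?_⟩
  rw [fisherRaoSpeed]
  calc √2 * ((√((u + ε) ^ 2 - 1))⁻¹ * u') = √2 * u' / √((u + ε) ^ 2 - 1) := by ring
    _ ≤ √(u ^ 2 - 1) * _ / √((u + ε) ^ 2 - 1) := by gcongr
    _ ≤ √((u + ε) ^ 2 - 1) * _ / √((u + ε) ^ 2 - 1) := by
      gcongr
      · exact div_nonneg (Real.sqrt_nonneg _) (hpos t (Ioo_subset_Icc_self ht)).le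
      · nlinarith
    _ = _ := by field_simp

theorem sqrt_two_mul_arcosh_le (hγ : IsAdmissiblePath p q γ) :
    √2 * Real.arcosh (fisherRaoCosh p q) ≤ fisherRaoLength γ := by
  have harcosh {c : ℝ} (hc : 1 ≤ c) :
      ContinuousWithinAt (fun ε => √2 * Real.arcosh (c + ε)) (Ioi 0) 0 := by
    refine ((continuousOn_arcosh.comp (continuousOn_const.add continuousOn_id)
      fun ε (hε : 0 ≤ ε) => show 1 ≤ c + ε by linarith).const_smul √2).continuousWithinAt
      self_mem_Ici |>.mono Ioi_subset_Ici_self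
  have hlim := (harcosh (one_le_fisherRaoCosh hγ.snd_left_pos hγ.snd_right_pos)).sub
    (harcosh le_rfl)
  have := le_of_tendsto hlim.tendsto
    (eventually_nhdsWithin_of_forall fun ε hε => hγ.sqrt_two_mul_arcosh_add_sub_le hε)
  simpa [arcosh_zero] using this

end IsAdmissiblePath

theorem fisherRaoSpeed_div {a b : ℝ → ℝ} {a' b' k t : ℝ} (ha : HasDerivAt a a' t)
    (hb : HasDerivAt b b' t) (hat : 0 < a t) (hk : 0 < k) :
    fisherRaoSpeed (fun τ => (b τ / a τ, k / a τ)) t =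
      √((b' * a t - b t * a') ^ 2 + 2 * k ^ 2 * a' ^ 2) / (k * a t) := by
  simp only [fisherRaoSpeed, (hb.fun_div ha hat.ne').deriv,
    ((hasDerivAt_const t k).fun_div ha hat.ne').deriv]
  rw [show ((b' * a t - b t * a') / a t ^ 2) ^ 2 + 2 * ((0 * a t - k * a') / a t ^ 2) ^ 2 =
      ((b' * a t - b t * a') ^ 2 + 2 * k ^ 2 * a' ^ 2) / (a t ^ 2) ^ 2 by ring,
    Real.sqrt_div' _ (by positivity), Real.sqrt_sq (by positivity)]
  field_simp

/-- Up to the factor `√2` in `μ`, `(μ / σ, 1 / σ)` are linear coordinates on the hyperboloid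
model, where the geodesic from `P` to `Q` at distance `D` is
`(sinh ((1 - t) D) P + sinh (t D) Q) / sinh D`. -/
noncomputable def fisherRaoGeodesic (p q : ℝ × ℝ) (t : ℝ) : ℝ × ℝ :=
  let D := Real.arcosh (fisherRaoCosh p q)
  let x := sinh ((1 - t) * D)
  let y := sinh (t * D)
  ((q.2 * p.1 * x + p.2 * q.1 * y) / (q.2 * x + p.2 * y),
    p.2 * q.2 * sinh D / (q.2 * x + p.2 * y))

section

variable {p q : ℝ × ℝ}

theorem sinh_arcosh_fisherRaoCosh_pos (hp : 0 < p.2) (hq : 0 < q.2) (hpq : p ≠ q) :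
    0 < sinh (Real.arcosh (fisherRaoCosh p q)) :=
  sinh_pos_iff.2 (arcosh_pos (one_lt_fisherRaoCosh hp hq hpq))

theorem fisherRaoGeodesic_denom_pos (hp : 0 < p.2) (hq : 0 < q.2) (hpq : p ≠ q) {t : ℝ}
    (ht : t ∈ Icc (0 : ℝ) 1) :
    0 < q.2 * sinh ((1 - t) * Real.arcosh (fisherRaoCosh p q)) +
      p.2 * sinh (t * Real.arcosh (fisherRaoCosh p q)) := by
  have hD := arcosh_pos (one_lt_fisherRaoCosh hp hq hpq)
  have hx : 0 ≤ sinh ((1 - t) * Real.arcosh (fisherRaoCosh p q)) :=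
    sinh_nonneg_iff.2 (mul_nonneg (sub_nonneg.2 ht.2) hD.le)
  have hy : 0 ≤ sinh (t * Real.arcosh (fisherRaoCosh p q)) :=
    sinh_nonneg_iff.2 (mul_nonneg ht.1 hD.le)
  rcases ht.2.lt_or_eq with ht1 | rfl
  · have := sinh_pos_iff.2 (mul_pos (sub_pos.2 ht1) hD)
    positivity
  · have := sinh_arcosh_fisherRaoCosh_pos hp hq hpq
    simp only [one_mul]
    positivity

theorem isAdmissiblePath_fisherRaoGeodesic (hp : 0 < p.2) (hq : 0 < q.2) (hpq : p ≠ q) :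
    IsAdmissiblePath p q (fisherRaoGeodesic p q) := by
  have hS := sinh_arcosh_fisherRaoCosh_pos hp hq hpq
  have hden := fun t (ht : t ∈ Icc (0 : ℝ) 1) => fisherRaoGeodesic_denom_pos hp hq hpq ht
  refine ⟨?_, ?_, ?_, fun t ht => ?_⟩
  · simp only [fisherRaoGeodesic, sub_zero, one_mul, zero_mul, sinh_zero, mul_zero, add_zero]
    ext <;> field_simp
  · simp only [fisherRaoGeodesic, sub_self, one_mul, zero_mul, sinh_zero, mul_zero, zero_add]
    ext <;> field_simp
  · exact ContDiffOn.prodMk (.div (by fun_prop) (by fun_prop) fun t ht => (hden t ht).ne')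
      (.div (by fun_prop) (by fun_prop) fun t ht => (hden t ht).ne')
  · exact div_pos (by positivity) (hden t ht)

theorem fisherRaoSpeed_fisherRaoGeodesic (hp : 0 < p.2) (hq : 0 < q.2)
    (hpq : p ≠ q) {t : ℝ} (ht : t ∈ Icc (0 : ℝ) 1) :
    fisherRaoSpeed (fisherRaoGeodesic p q) t = √2 * Real.arcosh (fisherRaoCosh p q) := by
  have hC1 := one_lt_fisherRaoCosh hp hq hpq
  have hS := sinh_arcosh_fisherRaoCosh_pos hp hq hpq
  have hD := arcosh_pos hC1
  have hden := fisherRaoGeodesic_denom_pos hp hq hpq ht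
  set C := fisherRaoCosh p q with hCdef
  set D := Real.arcosh C
  have hx := (hasDerivAt_sinh _).comp t (((hasDerivAt_id t).const_sub 1).mul_const D)
  have hy := (hasDerivAt_sinh _).comp t ((hasDerivAt_id t).mul_const D)
  have hk : 0 < p.2 * q.2 * sinh D := by positivity
  refine (fisherRaoSpeed_div ((hx.const_mul q.2).add (hy.const_mul p.2))
    ((hx.const_mul (q.2 * p.1)).add (hy.const_mul (p.2 * q.1))) hden hk).trans ?_
  simp only [Function.comp, id, Pi.add_apply]
  have hsinh :
      sinh D = sinh ((1 - t) * D) * cosh (t * D) + cosh ((1 - t) * D) * sinh (t * D) := by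
    rw [← sinh_add]; ring_nf
  have hcosh : C = cosh ((1 - t) * D) * cosh (t * D) + sinh ((1 - t) * D) * sinh (t * D) := by
    rw [← cosh_add, ← show cosh D = C from cosh_arcosh hC1.le]; ring_nf
  have hC : 4 * p.2 * q.2 * C = 4 * p.2 * q.2 + (p.1 - q.1) ^ 2 + 2 * (p.2 - q.2) ^ 2 := by
    rw [hCdef, fisherRaoCosh]; field_simp; ring
  have hu := cosh_sq_sub_sinh_sq ((1 - t) * D)
  have hv := cosh_sq_sub_sinh_sq (t * D)
  generalize sinh ((1 - t) * D) = x at *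
  generalize sinh (t * D) = y at *
  generalize cosh ((1 - t) * D) = cu at *
  generalize cosh (t * D) = cv at *
  generalize sinh D = S at *
  have h2 : √2 ^ 2 = 2 := Real.sq_sqrt zero_le_two
  set P := p.2
  set Q := q.2
  rw [show _ + 2 * (P * Q * S) ^ 2 * _ = (√2 * D * (P * Q * S * (Q * x + P * y))) ^ 2 by
    linear_combination (2 * Q ^ 2 * P ^ 2 * Q ^ 2 * D ^ 2 * S ^ 2) * hu
      + (2 * P ^ 2 * P ^ 2 * Q ^ 2 * D ^ 2 * S ^ 2) * hv
      + (4 * P * Q * P ^ 2 * Q ^ 2 * D ^ 2 * S ^ 2) * hcosh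
      - (P ^ 2 * Q ^ 2 * D ^ 2 * S ^ 2) * hC
      - (P ^ 2 * Q ^ 2 * (q.1 - p.1) ^ 2 * D ^ 2 * (S + x * cv + cu * y)) * hsinh
      - (D ^ 2 * (P * Q * S) ^ 2 * (Q * x + P * y) ^ 2) * h2,
    Real.sqrt_sq (by positivity)]
  field_simp

theorem fisherRaoLength_fisherRaoGeodesic (hp : 0 < p.2) (hq : 0 < q.2) (hpq : p ≠ q) :
    fisherRaoLength (fisherRaoGeodesic p q) = √2 * Real.arcosh (fisherRaoCosh p q) := by
  rw [fisherRaoLength_eq_integral_fisherRaoSpeed, intervalIntegral.integral_congr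
    (g := fun _ => √2 * Real.arcosh (fisherRaoCosh p q)) fun t ht =>
      fisherRaoSpeed_fisherRaoGeodesic hp hq hpq (by rwa [uIcc_of_le zero_le_one] at ht)]
  simp

theorem exists_isAdmissiblePath_fisherRaoLength_eq (hp : 0 < p.2) (hq : 0 < q.2) :
    ∃ γ, IsAdmissiblePath p q γ ∧
      fisherRaoLength γ = √2 * Real.arcosh (fisherRaoCosh p q) := by
  rcases eq_or_ne p q with rfl | hpq
  · refine ⟨fun _ => p, ⟨rfl, rfl, contDiffOn_const, fun _ _ => hp⟩, ?_⟩
    simp [fisherRaoLength, fisherRaoCosh_self, arcosh_zero]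
  · exact ⟨_, isAdmissiblePath_fisherRaoGeodesic hp hq hpq,
      fisherRaoLength_fisherRaoGeodesic hp hq hpq⟩

theorem fisherRaoDist_eq (hp : 0 < p.2) (hq : 0 < q.2) :
    fisherRaoDist p q = √2 * Real.arcosh (fisherRaoCosh p q) := by
  obtain ⟨γ, hγ, hlen⟩ := exists_isAdmissiblePath_fisherRaoLength_eq hp hq
  refine IsLeast.csInf_eq ⟨⟨γ, hγ, hlen⟩, ?_⟩
  rintro _ ⟨γ', hγ', rfl⟩
  exact hγ'.sqrt_two_mul_arcosh_le

end

/-- Closed form of the Fisher–Rao distance between `N(μ₁,σ₁²)` and `N(μ₂,σ₂²)`: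
`d_F = √2 · arcosh(1 + ((μ₁−μ₂)² + 2(σ₁−σ₂)²)/(4σ₁σ₂))`. -/
theorem fisherRaoDist_gaussian_closed_form (μ₁ μ₂ σ₁ σ₂ : ℝ)
    (hσ₁ : 0 < σ₁) (hσ₂ : 0 < σ₂) :
    fisherRaoDist (μ₁, σ₁) (μ₂, σ₂) =
      Real.sqrt 2 *
        _root_.arcosh (1 + ((μ₁ - μ₂) ^ 2 + 2 * (σ₁ - σ₂) ^ 2) / (4 * σ₁ * σ₂)) :=
  fisherRaoDist_eq (p := (μ₁, σ₁)) (q := (μ₂, σ₂)) hσ₁ hσ₂
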